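/- Let ρ_λ : S_n → GL(W^λ) be the representation defined by the Young orthogonal form (sending (k−1 k) to s_k). Then for every standard tableau T of shape λ and every 1 ≤ k ≤ n, the Jucys–Murphy element acts diagonally: Σ_{j=1}^{k−1} ρ_λ((j k)) e_T = c_T(k) · e_T (for k = 1 the empty sum equals 0 = c_T(1) · e_T). -/

import Mathlib

noncomputable section

namespace WLE

/-- A filling (bijective labelling of the cells of `μ` by `Fin μ.card`) is *standard* if
its entries increase strictly along rows and columns. -/
def IsStandard (μ : YoungDiagram) (f : {c : ℕ × ℕ // c ∈ μ.cells} ≃ Fin μ.card) : Prop :=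
  ∀ c c' : {c : ℕ × ℕ // c ∈ μ.cells},
    ((c.1.1 = c'.1.1 ∧ c.1.2 < c'.1.2) ∨ (c.1.2 = c'.1.2 ∧ c.1.1 < c'.1.1)) →
      f c < f c'

/-- A standard Young tableau of shape `μ`: a bijection from the cells of `μ` to
`Fin μ.card` (0-indexed entries; the paper's entry `k ∈ {1,…,n}` corresponds to the
value `k − 1 : Fin μ.card`) increasing along rows and columns. -/
def SYT (μ : YoungDiagram) : Type :=
  {f : {c : ℕ × ℕ // c ∈ μ.cells} ≃ Fin μ.card // IsStandard μ f}

instance (μ : YoungDiagram) : Finite (SYT μ) := by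
  have : Finite ({c : ℕ × ℕ // c ∈ μ.cells} ≃ Fin μ.card) :=
    Finite.of_injective (fun f => (f : {c : ℕ × ℕ // c ∈ μ.cells} → Fin μ.card))
      fun f g h => Equiv.coe_fn_injective h
  exact Subtype.finite

noncomputable instance (μ : YoungDiagram) : Fintype (SYT μ) := Fintype.ofFinite _

noncomputable instance (μ : YoungDiagram) : DecidableEq (SYT μ) := Classical.decEq _

/-- `content T k` is the content `j − i` of the cell (row `i`, column `j`, 0-indexed)
of `T` containing the entry `k`. -/
def content {μ : YoungDiagram} (T : SYT μ) (k : Fin μ.card) : ℤ :=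
  ((T.1.symm k).1.2 : ℤ) - ((T.1.symm k).1.1 : ℤ)

/-- The index `k − 1` (in `Fin μ.card`), used to form the adjacent transposition
`(k−1 k)`. -/
def kpred {μ : YoungDiagram} (k : Fin μ.card) : Fin μ.card :=
  ⟨k.val - 1, lt_of_le_of_lt (Nat.sub_le _ _) k.isLt⟩

/-- The filling obtained from `T` by exchanging the entries `k−1` and `k`. -/
def swapped {μ : YoungDiagram} (k : Fin μ.card) (T : SYT μ) :
    {c : ℕ × ℕ // c ∈ μ.cells} ≃ Fin μ.card :=
  T.1.trans (Equiv.swap (kpred k) k)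

/-- The (real) axial distance `d = c_T(k) − c_T(k−1)`. -/
def dval {μ : YoungDiagram} (k : Fin μ.card) (T : SYT μ) : ℝ :=
  ((content T k - content T (kpred k) : ℤ) : ℝ)

noncomputable instance (μ : YoungDiagram) : DecidablePred (IsStandard μ) :=
  fun _ => Classical.propDecidable _

/-- The Young orthogonal form operator `s_k` on `W^μ = EuclideanSpace ℝ (SYT μ)`:
`s_k e_T = (1/d) e_T + √(1 − 1/d²) e_{(k−1 k)T}`, with `d = c_T(k) − c_T(k−1)` and
`e_{(k−1 k)T} = 0` when the swapped filling is not standard. -/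
def youngOp (μ : YoungDiagram) (k : Fin μ.card) :
    EuclideanSpace ℝ (SYT μ) →ₗ[ℝ] EuclideanSpace ℝ (SYT μ) where
  toFun x := WithLp.toLp 2 fun T => (dval k T)⁻¹ * x T +
    Real.sqrt (1 - ((dval k T)⁻¹) ^ 2) *
      (if h : IsStandard μ (swapped k T) then x ⟨swapped k T, h⟩ else 0)
  map_add' x y := by
    ext T
    by_cases h : IsStandard μ (swapped k T) <;>
      simp [h, PiLp.add_apply] <;> (try erw [Pi.add_apply]) <;> ring
  map_smul' c x := by
    ext T
    by_cases h : IsStandard μ (swapped k T) <;>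
      simp [h, PiLp.smul_apply, smul_eq_mul] <;> (try erw [Pi.smul_apply]) <;> (try simp) <;> ring

end WLE

namespace WLE


/-!
The Jucys–Murphy elements `X_k = ∑_{j<k} (j k)` satisfy `X_k = s_k + s_k X_{k−1} s_k`, since
`(j k) = (k−1 k)(j k−1)(k−1 k)` for `j < k−1`. By induction `X_{k−1}` is diagonal with eigenvalue
`c_S(k−1)` on `e_S`. Exchanging `k−1` and `k` exchanges their contents, so on the span of `e_T` and
`e_{(k−1 k)T}` the operator `s_k` has matrix `[[a, b], [b, −a]]` with `a = 1/d`, `b = √(1 − a²)`,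
while `X_{k−1}` is `diag(c_T(k−1), c_T(k))`; as `a (c_T(k) − c_T(k−1)) = 1`, a `2 × 2` computation
gives `X_k e_T = c_T(k) e_T`. If `(k−1 k)T` is not standard, `k−1` and `k` are neighbours in a row
or a column of `T`, so `d = ±1` and `b = 0`. The base case holds because the entry `0` lies in
the corner cell.
-/

variable {μ : YoungDiagram}

theorem IsStandard.strictMono {f : {c : ℕ × ℕ // c ∈ μ.cells} ≃ Fin μ.card}
    (hf : IsStandard μ f) : StrictMono f := by
  intro c c' hlt
  have hle : c.1.1 ≤ c'.1.1 ∧ c.1.2 ≤ c'.1.2 := hlt.le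
  let m : {c : ℕ × ℕ // c ∈ μ.cells} :=
    ⟨(c.1.1, c'.1.2), μ.up_left_mem hle.1 le_rfl c'.2⟩
  have hcm : f c ≤ f m := by
    rcases hle.2.lt_or_eq with h | h
    · exact (hf c m (Or.inl ⟨rfl, h⟩)).le
    · exact (congrArg f (show c = m from Subtype.ext (Prod.ext rfl h))).le
  have hmc : f m ≤ f c' := by
    rcases hle.1.lt_or_eq with h | h
    · exact (hf m c' (Or.inr ⟨rfl, h⟩)).le
    · exact (congrArg f (show m = c' from Subtype.ext (Prod.ext h rfl))).le
  exact (hcm.trans hmc).lt_of_ne (f.injective.ne hlt.ne)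

theorem cell_lt_iff {c c' : {c : ℕ × ℕ // c ∈ μ.cells}} :
    c < c' ↔ c.1.1 ≤ c'.1.1 ∧ c.1.2 ≤ c'.1.2 ∧ (c.1.1 ≠ c'.1.1 ∨ c.1.2 ≠ c'.1.2) := by
  rw [lt_iff_le_and_ne, Ne, Subtype.ext_iff, Prod.ext_iff, ← Subtype.coe_le_coe, Prod.le_def]
  tauto

theorem val_kpred (k : Fin μ.card) : (kpred k).val = k.val - 1 := rfl

namespace SYT

variable (T : SYT μ) {k : Fin μ.card}

theorem content_eq_zero_of_val_eq_zero (hk : k.val = 0) : content T k = 0 := by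
  set A := T.1.symm k with hA
  let O : {c : ℕ × ℕ // c ∈ μ.cells} :=
    ⟨(0, 0), μ.up_left_mem (Nat.zero_le _) (Nat.zero_le _) A.2⟩
  have hOA : O ≤ A := Prod.mk_le_mk.2 ⟨Nat.zero_le _, Nat.zero_le _⟩
  have hOA' : ¬ O < A := fun h => by
    have := T.2.strictMono h
    rw [hA, T.1.apply_symm_apply, Fin.lt_def] at this
    omega
  simp [content, ← hA, ← hOA.eq_of_not_lt hOA', O]

theorem not_between_kpred (hk : 1 ≤ k.val) {A B C : {c : ℕ × ℕ // c ∈ μ.cells}}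
    (hA : T.1 A = kpred k) (hB : T.1 B = k) (hAC : A < C) : ¬ C < B := fun hCB => by
  have h1 := T.2.strictMono hAC
  have h2 := T.2.strictMono hCB
  rw [hA, Fin.lt_def, val_kpred] at h1
  rw [hB, Fin.lt_def] at h2
  omega

theorem content_ne_content_kpred (hk : 1 ≤ k.val) : content T k ≠ content T (kpred k) := by
  obtain ⟨A, hA⟩ := T.1.surjective (kpred k)
  obtain ⟨B, hB⟩ := T.1.surjective k
  intro h
  rw [content, content, ← hA, ← hB, T.1.symm_apply_apply, T.1.symm_apply_apply] at h
  rcases lt_trichotomy A.1.1 B.1.1 with hlt | heq | hgt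
  · exact T.not_between_kpred hk (C := ⟨(A.1.1, B.1.2), μ.up_left_mem hlt.le le_rfl B.2⟩)
      hA hB
      (cell_lt_iff.2 ⟨le_rfl, by dsimp only; omega, by dsimp only; omega⟩)
      (cell_lt_iff.2 ⟨hlt.le, le_rfl, by dsimp only; omega⟩)
  · have hAB : A = B := Subtype.ext (Prod.ext heq (by omega))
    rw [hAB, hB, Fin.ext_iff, val_kpred] at hA
    omega
  · have := T.2.strictMono (cell_lt_iff.2 ⟨hgt.le, by omega, by omega⟩ : B < A)
    rw [hA, hB, Fin.lt_def, val_kpred] at this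
    omega

theorem symm_kpred_lt_symm_of_not_isStandard (hk : 1 ≤ k.val)
    (h : ¬ IsStandard μ (swapped k T)) : T.1.symm (kpred k) < T.1.symm k := by
  simp only [IsStandard, not_forall, not_lt] at h
  obtain ⟨c, c', hcc', hle⟩ := h
  have hlt := T.2 c c' hcc'
  have hc : T.1 c = kpred k ∧ T.1 c' = k := by
    simp only [swapped, Equiv.trans_apply, Equiv.swap_apply_def] at hle
    split_ifs at hle <;> simp only [Fin.ext_iff, Fin.lt_def, Fin.le_def, val_kpred] at * <;>
      omega
  rw [← hc.1, ← hc.2, T.1.symm_apply_apply, T.1.symm_apply_apply, cell_lt_iff]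
  omega

theorem content_sub_content_kpred_eq_one_or_neg_one (hk : 1 ≤ k.val)
    (h : ¬ IsStandard μ (swapped k T)) :
    content T k - content T (kpred k) = 1 ∨ content T k - content T (kpred k) = -1 := by
  have hAB := T.symm_kpred_lt_symm_of_not_isStandard hk h
  obtain ⟨A, hA⟩ := T.1.surjective (kpred k)
  obtain ⟨B, hB⟩ := T.1.surjective k
  rw [← hA, ← hB, T.1.symm_apply_apply, T.1.symm_apply_apply, cell_lt_iff] at hAB
  rw [content, content, ← hA, ← hB, T.1.symm_apply_apply, T.1.symm_apply_apply]
  by_cases hrow : A.1.1 < B.1.1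
  · have hbelow : B.1.1 = A.1.1 + 1 ∧ B.1.2 = A.1.2 := by
      by_contra hne
      exact T.not_between_kpred hk
        (C := ⟨(A.1.1 + 1, A.1.2), μ.up_left_mem hrow hAB.2.1 B.2⟩) hA hB
        (cell_lt_iff.2 ⟨by dsimp only; omega, le_rfl, by dsimp only; omega⟩)
        (cell_lt_iff.2 ⟨hrow, hAB.2.1, by dsimp only; omega⟩)
    omega
  · have hright : B.1.1 = A.1.1 ∧ B.1.2 = A.1.2 + 1 := by
      by_contra hne
      have hcol : A.1.2 < B.1.2 := by omega
      exact T.not_between_kpred hk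
        (C := ⟨(A.1.1, A.1.2 + 1), μ.up_left_mem hAB.1 hcol B.2⟩) hA hB
        (cell_lt_iff.2 ⟨le_rfl, by dsimp only; omega, by dsimp only; omega⟩)
        (cell_lt_iff.2 ⟨hAB.1, hcol, by dsimp only; omega⟩)
    omega

end SYT

section Swapped

variable {k : Fin μ.card} {S T : SYT μ}

theorem swapped_eq_iff : swapped k S = T.1 ↔ S.1 = swapped k T := by
  simp only [swapped, Equiv.ext_iff, Equiv.trans_apply, Equiv.swap_apply_eq_iff]

theorem content_of_eq_swapped (h : S.1 = swapped k T) :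
    content S k = content T (kpred k) := by
  simp [content, h, swapped]

theorem content_kpred_of_eq_swapped (h : S.1 = swapped k T) :
    content S (kpred k) = content T k := by
  simp [content, h, swapped]

theorem dval_of_eq_swapped (h : S.1 = swapped k T) : dval k S = -dval k T := by
  simp [dval, content_of_eq_swapped h, content_kpred_of_eq_swapped h]

end Swapped

-- Naming `(k−1 k)T` keeps its type `SYT μ` syntactically: an anonymous constructor would be
-- elaborated at the underlying subtype, and lemmas about `EuclideanSpace.single` would not apply.
def swapSYT (k : Fin μ.card) (T : SYT μ) (h : IsStandard μ (swapped k T)) : SYT μ :=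
  ⟨swapped k T, h⟩

theorem eq_swapSYT_iff {k : Fin μ.card} {S T : SYT μ} (h : IsStandard μ (swapped k T)) :
    S = swapSYT k T h ↔ S.1 = swapped k T :=
  Subtype.ext_iff

theorem swapSYT_eq_iff {k : Fin μ.card} {S T : SYT μ} (h : IsStandard μ (swapped k S)) :
    swapSYT k S h = T ↔ S.1 = swapped k T :=
  Subtype.ext_iff.trans swapped_eq_iff

/-- The vector `e_{(k−1 k)T}`, which is `0` when the swapped filling is not standard. -/
def singleSwapped (k : Fin μ.card) (T : SYT μ) : EuclideanSpace ℝ (SYT μ) :=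
  if h : IsStandard μ (swapped k T) then EuclideanSpace.single (swapSYT k T h) 1 else 0

theorem singleSwapped_apply (k : Fin μ.card) (T S : SYT μ) :
    singleSwapped k T S = if S.1 = swapped k T then 1 else 0 := by
  unfold singleSwapped
  split_ifs with hT hS hS
  · rw [PiLp.single_apply, if_pos ((eq_swapSYT_iff hT).2 hS)]
  · rw [PiLp.single_apply, if_neg (mt (eq_swapSYT_iff hT).1 hS)]
  · exact absurd (hS ▸ S.2) hT
  · rfl

theorem youngOp_single (k : Fin μ.card) (T : SYT μ) :
    youngOp μ k (EuclideanSpace.single T 1) =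
      (dval k T)⁻¹ • EuclideanSpace.single T 1 +
        √(1 - (dval k T)⁻¹ ^ 2) • singleSwapped k T := by
  ext S
  have hswap : (if h : IsStandard μ (swapped k S) then
      EuclideanSpace.single T (1 : ℝ) (swapSYT k S h) else 0) =
        if S.1 = swapped k T then 1 else 0 := by
    simp only [PiLp.single_apply, swapSYT_eq_iff]
    split_ifs with hS hST hST
    · rfl
    · rfl
    · exact absurd (swapped_eq_iff.2 hST ▸ T.2) hS
    · rfl
  change (dval k S)⁻¹ * _ + √(1 - (dval k S)⁻¹ ^ 2) *
    (if h : IsStandard μ (swapped k S) then EuclideanSpace.single T (1 : ℝ) (swapSYT k S h)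
      else 0) = _
  rw [hswap]
  simp only [PiLp.add_apply, PiLp.smul_apply, smul_eq_mul, singleSwapped_apply,
    PiLp.single_apply]
  split_ifs with hST hS hS
  · subst hST; rfl
  · subst hST; rfl
  · rw [dval_of_eq_swapped hS, inv_neg, neg_sq]; ring
  · ring

theorem singleSwapped_swapSYT (k : Fin μ.card) (T : SYT μ) (h : IsStandard μ (swapped k T)) :
    singleSwapped k (swapSYT k T h) = EuclideanSpace.single T 1 := by
  have h' : IsStandard μ (swapped k (swapSYT k T h)) :=
    (swapped_eq_iff (S := swapSYT k T h) (T := T)).2 rfl ▸ T.2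
  rw [singleSwapped, dif_pos h', (swapSYT_eq_iff h').2 rfl]

theorem dval_ne_zero (T : SYT μ) {k : Fin μ.card} (hk : 1 ≤ k.val) : dval k T ≠ 0 := by
  rw [dval, Int.cast_ne_zero, sub_ne_zero]
  exact T.content_ne_content_kpred hk

theorem inv_dval_sq_le_one (T : SYT μ) {k : Fin μ.card} (hk : 1 ≤ k.val) :
    (dval k T)⁻¹ ^ 2 ≤ 1 := by
  rw [inv_pow]
  apply inv_le_one_of_one_le₀
  rw [one_le_sq_iff_one_le_abs, dval]
  exact_mod_cast Int.one_le_abs (sub_ne_zero.2 (T.content_ne_content_kpred hk))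

theorem youngOp_singleSwapped (T : SYT μ) {k : Fin μ.card} (hk : 1 ≤ k.val) :
    youngOp μ k (singleSwapped k T) =
      (-(dval k T)⁻¹) • singleSwapped k T +
        √(1 - (dval k T)⁻¹ ^ 2) • EuclideanSpace.single T 1 := by
  by_cases h : IsStandard μ (swapped k T)
  · rw [singleSwapped, dif_pos h, youngOp_single, singleSwapped_swapSYT,
      dval_of_eq_swapped (by rfl), inv_neg, neg_sq]
  · have hd := T.content_sub_content_kpred_eq_one_or_neg_one hk h
    have hb : √(1 - (dval k T)⁻¹ ^ 2) = 0 := by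
      rcases hd with hd | hd <;> simp [dval, hd]
    rw [singleSwapped, dif_neg h, map_zero, hb, zero_smul, smul_zero, add_zero]

theorem apply_singleSwapped {k : Fin μ.card} (D : Module.End ℝ (EuclideanSpace ℝ (SYT μ)))
    (hD : ∀ S, D (EuclideanSpace.single S 1) =
      (content S (kpred k) : ℝ) • EuclideanSpace.single S 1)
    (T : SYT μ) : D (singleSwapped k T) = (content T k : ℝ) • singleSwapped k T := by
  by_cases h : IsStandard μ (swapped k T)
  · rw [singleSwapped, dif_pos h, hD, content_kpred_of_eq_swapped (by rfl)]
  · simp [singleSwapped, h]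

theorem add_mul_mul_apply_eq_smul {R V : Type*} [CommRing R] [AddCommGroup V] [Module R V]
    {Y D : Module.End R V} {e e' : V} {a b c c' : R}
    (hYe : Y e = a • e + b • e') (hYe' : Y e' = (-a) • e' + b • e)
    (hDe : D e = c' • e) (hDe' : D e' = c • e')
    (ha : a * (c - c') = 1) (hb : b ^ 2 = 1 - a ^ 2) :
    (Y + Y * D * Y) e = c • e := by
  calc (Y + Y * D * Y) e = Y e + Y (D (Y e)) := rfl
    _ = (a + a * c' * a + b * c * b) • e + (b + a * c' * b - b * c * a) • e' := by
      simp only [hYe, map_add, map_smul, hDe, hDe', hYe']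
      module
    _ = c • e := by
      rw [show a + a * c' * a + b * c * b = c by linear_combination c * hb - a * ha,
        show b + a * c' * b - b * c * a = 0 by linear_combination -b * ha, zero_smul, add_zero]

theorem youngOp_add_mul_mul_youngOp_single {k : Fin μ.card} (hk : 1 ≤ k.val)
    (D : Module.End ℝ (EuclideanSpace ℝ (SYT μ)))
    (hD : ∀ S, D (EuclideanSpace.single S 1) =
      (content S (kpred k) : ℝ) • EuclideanSpace.single S 1)
    (T : SYT μ) :
    (youngOp μ k + youngOp μ k * D * youngOp μ k) (EuclideanSpace.single T 1) =
      (content T k : ℝ) • EuclideanSpace.single T 1 :=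
  add_mul_mul_apply_eq_smul (youngOp_single k T) (youngOp_singleSwapped T hk) (hD T)
    (apply_singleSwapped D hD T)
    (by rw [← Int.cast_sub]; exact inv_mul_cancel₀ (dval_ne_zero T hk))
    (Real.sq_sqrt (by linarith [inv_dval_sq_le_one T hk]))

theorem sum_Iio_swap_eq {R : Type*} [Semiring R] (f : Equiv.Perm (Fin μ.card) →* R)
    {k : Fin μ.card} (hk : 1 ≤ k.val) :
    ∑ j ∈ Finset.Iio k, f (Equiv.swap j k) =
      f (Equiv.swap (kpred k) k) +
        f (Equiv.swap (kpred k) k) * (∑ j ∈ Finset.Iio (kpred k), f (Equiv.swap j (kpred k))) *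
          f (Equiv.swap (kpred k) k) := by
  have hIio : Finset.Iio k = insert (kpred k) (Finset.Iio (kpred k)) := by
    ext j
    simp only [Finset.mem_Iio, Finset.mem_insert, Fin.lt_def, Fin.ext_iff, val_kpred]
    omega
  rw [hIio, Finset.sum_insert (by simp), Finset.mul_sum, Finset.sum_mul]
  congr 1
  refine Finset.sum_congr rfl fun j hj => ?_
  have hj : j.val < k.val - 1 := by simpa [Fin.lt_def, val_kpred] using hj
  rw [← map_mul, ← map_mul,
    Equiv.swap_mul_swap_mul_swap (by simp [Fin.ext_iff, val_kpred]; omega)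
      (by simp [Fin.ext_iff]; omega),
    Equiv.swap_comm]

theorem jucysMurphy_diagonal_general (μ : YoungDiagram)
    (ρ : Equiv.Perm (Fin μ.card) →* (Module.End ℝ (EuclideanSpace ℝ (SYT μ)))ˣ)
    (hρ : ∀ k : Fin μ.card, 1 ≤ k.val →
      ((ρ (Equiv.swap (kpred k) k) : Module.End ℝ (EuclideanSpace ℝ (SYT μ)))) =
        youngOp μ k)
    (T : SYT μ) (k : Fin μ.card) :
    ∑ j ∈ Finset.Iio k,
        (ρ (Equiv.swap j k) : Module.End ℝ (EuclideanSpace ℝ (SYT μ)))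
          (EuclideanSpace.single T (1 : ℝ)) =
      ((content T k : ℝ)) • EuclideanSpace.single T (1 : ℝ) := by
  obtain ⟨m, hm⟩ : ∃ m, k.val = m := ⟨_, rfl⟩
  induction m generalizing k T with
  | zero =>
    have hIio : Finset.Iio k = ∅ := Finset.eq_empty_of_forall_notMem fun j hj => by
      rw [Finset.mem_Iio, Fin.lt_def] at hj
      omega
    rw [hIio, Finset.sum_empty, T.content_eq_zero_of_val_eq_zero hm, Int.cast_zero, zero_smul]
  | succ m ih =>
    have hk : 1 ≤ k.val := by omega
    have hrec := sum_Iio_swap_eq ((Units.coeHom _).comp ρ) hk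
    simp only [MonoidHom.coe_comp, Function.comp_apply, Units.coeHom_apply, hρ k hk] at hrec
    rw [← LinearMap.sum_apply, hrec]
    refine youngOp_add_mul_mul_youngOp_single hk _ (fun S => ?_) T
    rw [LinearMap.sum_apply]
    exact ih S (kpred k) (by rw [val_kpred]; omega)

/-- Let `ρ_λ : S_n → GL(W^λ)` be the representation defined by the
Young orthogonal form (sending each adjacent transposition `(k−1 k)` to `s_k`).
Then for every standard tableau `T` of shape `λ` and every `1 ≤ k ≤ n` (0-indexed
`k : Fin μ.card`), the Jucys–Murphy element acts diagonally:
`Σ_{j<k} ρ_λ((j k)) e_T = c_T(k) · e_T` (for the smallest `k` the empty sum is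
`0 = c_T(k) · e_T`, the content of the first entry being `0`). -/
theorem jucysMurphy_diagonal (μ : YoungDiagram) (hn : 2 ≤ μ.card)
    (ρ : Equiv.Perm (Fin μ.card) →* (Module.End ℝ (EuclideanSpace ℝ (SYT μ)))ˣ)
    (hρ : ∀ k : Fin μ.card, 1 ≤ k.val →
      ((ρ (Equiv.swap (kpred k) k) : Module.End ℝ (EuclideanSpace ℝ (SYT μ)))) =
        youngOp μ k)
    (T : SYT μ) (k : Fin μ.card) :
    ∑ j ∈ Finset.Iio k,
        (ρ (Equiv.swap j k) : Module.End ℝ (EuclideanSpace ℝ (SYT μ)))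
          (EuclideanSpace.single T (1 : ℝ)) =
      ((content T k : ℝ)) • EuclideanSpace.single T (1 : ℝ) :=
  jucysMurphy_diagonal_general μ ρ hρ T k

end WLE
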